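/- arXiv:1912.04881 — 2 statements merged into one kernel-verified Lean document; each statement's English description precedes it below -/
import Mathlib

section
/- Assume β + λω_k ≠ 0 for all k = 0,…,N−1. Let δ = min{β, 2λ sin²(π/N)} > 0. Then there exists a constant C > 0 (depending only on N, λ, β) such that for every z ∈ ℂ^{2N} whose first N coordinates sum to zero (Σ_{n=1}^{N} z_n = 0) and every t ≥ 0, ‖ e^{Bt} z ‖ ≤ C · ‖z‖ · e^{−δ t}; in particular e^{Bt} z → 0 as t → ∞ for all such z. -/
open Matrix Complex Finset Filter

noncomputable section

/-- The N×N matrix with -1 on the diagonal and 1 on the (cyclic) superdiagonal. -/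
def ringMat (N : ℕ) : Matrix (Fin N) (Fin N) ℝ :=
  fun n m => if (m : ℕ) = (n : ℕ) then -1 else if (m : ℕ) = ((n : ℕ) + 1) % N then 1 else 0

/-- γ_k = e^{2πik/N} -/
def gam (N k : ℕ) : ℂ := Complex.exp (2 * Real.pi * Complex.I * k / N)

/-- The 2N×2N block matrix B = [[λA, A], [0, −β I_N]] (complexified). -/
def blockB (N : ℕ) (lam beta : ℝ) : Matrix (Fin N ⊕ Fin N) (Fin N ⊕ Fin N) ℂ :=
  Matrix.fromBlocks ((lam : ℂ) • (ringMat N).map Complex.ofReal)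
    ((ringMat N).map Complex.ofReal) 0 (-(beta : ℂ) • 1)

/-- The Euclidean norm on ℂ^{2N}. -/
def eucNorm {N : ℕ} (v : Fin N ⊕ Fin N → ℂ) : ℝ := Real.sqrt (∑ i, ‖v i‖ ^ 2)

/-! The Fourier vectors `f_k = (γ_k ^ n)_n` are eigenvectors of the cyclic matrix `A` with
eigenvalues `ω_k`. Hence `B` has the eigenvectors `(f_k, 0)` for `λ ω_k` and `(c_k f_k, f_k)` for
`-β`, where `c_k = -ω_k / (β + λ ω_k)`; the matrix of these `2N` vectors is block triangular with
Vandermonde diagonal blocks, so they form a basis. Summing the first `N` coordinates kills every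
basis vector except `(f_0, 0)`, so on the hyperplane `∑ z_n = 0` only the eigenvalues `-β` and
`λ ω_k` with `k ≠ 0` occur, and `Re (λ ω_k) = -2λ sin² (πk/N) ≤ -2λ sin² (π/N)`. The coordinates
in a basis are bounded linear functionals, which gives the constant `C`. -/

theorem Matrix.exp_mulVec_of_mulVec_eq_smul {𝕜 ι : Type*} [RCLike 𝕜] [Fintype ι] [DecidableEq ι]
    {M : Matrix ι ι 𝕜} {v : ι → 𝕜} {μ : 𝕜} (h : M *ᵥ v = μ • v) :
    NormedSpace.exp M *ᵥ v = NormedSpace.exp μ • v := by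
  have hpow (n : ℕ) : M ^ n *ᵥ v = μ ^ n • v := by
    induction n with
    | zero => simp
    | succ n ih => rw [pow_succ', ← mulVec_mulVec, ih, mulVec_smul, h, smul_smul, pow_succ]
  have hM := open scoped Matrix.Norms.Operator in
    (NormedSpace.exp_series_hasSum_exp' (𝕂 := 𝕜) M).map
    ((Matrix.mulVecBilin 𝕜 𝕜).flip v) (LinearMap.continuous_of_finiteDimensional _)
  have hμ := (NormedSpace.exp_series_hasSum_exp' (𝕂 := 𝕜) μ).smul_const v
  refine hM.unique ?_
  convert hμ using 2 with n
  simp [hpow, smul_smul]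

theorem Module.Basis.exists_norm_apply_le_of_apply_eq_smul {𝕜 ι E : Type*}
    [NontriviallyNormedField 𝕜] [CompleteSpace 𝕜] [Fintype ι]
    [NormedAddCommGroup E] [NormedSpace 𝕜 E] [FiniteDimensional 𝕜 E] (b : Module.Basis ι 𝕜 E) :
    ∃ C > 0, ∀ (L : E →ₗ[𝕜] E) (c : ι → 𝕜), (∀ i, L (b i) = c i • b i) →
      ∀ (r : ℝ), 0 ≤ r → ∀ z, (∀ i, b.repr z i ≠ 0 → ‖c i‖ ≤ r) → ‖L z‖ ≤ C * ‖z‖ * r := by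
  set C₀ := ∑ i, ‖LinearMap.toContinuousLinearMap (b.coord i)‖ * ‖b i‖
  refine ⟨C₀ + 1, by positivity, fun L c hL r hr z hz => ?_⟩
  have hterm (i : ι) : ‖b.repr z i • c i • b i‖ ≤
      ‖LinearMap.toContinuousLinearMap (b.coord i)‖ * ‖b i‖ * (‖z‖ * r) := by
    by_cases hi : b.repr z i = 0
    · rw [hi, zero_smul, norm_zero]; positivity
    have hcoord : ‖b.repr z i‖ ≤ ‖LinearMap.toContinuousLinearMap (b.coord i)‖ * ‖z‖ :=
      (LinearMap.toContinuousLinearMap (b.coord i)).le_opNorm z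
    rw [_root_.norm_smul, _root_.norm_smul]
    calc ‖b.repr z i‖ * (‖c i‖ * ‖b i‖)
        ≤ (‖LinearMap.toContinuousLinearMap (b.coord i)‖ * ‖z‖) * (r * ‖b i‖) := by
          gcongr; exact hz i hi
      _ = _ := by ring
  calc ‖L z‖ = ‖∑ i, b.repr z i • c i • b i‖ := by
        conv_lhs => rw [← b.sum_repr z]
        simp only [map_sum, map_smul, hL]
    _ ≤ ∑ i, ‖LinearMap.toContinuousLinearMap (b.coord i)‖ * ‖b i‖ * (‖z‖ * r) :=
        (norm_sum_le _ _).trans (Finset.sum_le_sum fun i _ => hterm i)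
    _ = C₀ * ‖z‖ * r := by rw [← Finset.sum_mul]; ring
    _ ≤ (C₀ + 1) * ‖z‖ * r := by gcongr; linarith

lemma gam_eq_pow (N k : ℕ) : gam N k = Complex.exp (2 * Real.pi * I / N) ^ k := by
  rw [gam, ← Complex.exp_nat_mul]; ring_nf

lemma gam_pow_self {N : ℕ} (hN : N ≠ 0) (k : ℕ) : gam N k ^ N = 1 := by
  rw [gam_eq_pow, ← pow_mul, mul_comm k N, pow_mul, (isPrimitiveRoot_exp N hN).pow_eq_one, one_pow]

lemma gam_injective (N : ℕ) : Function.Injective fun k : Fin N => gam N k := by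
  rcases eq_or_ne N 0 with rfl | hN
  · exact fun j => j.elim0
  intro j k h
  simp only [gam_eq_pow] at h
  exact Fin.ext ((isPrimitiveRoot_exp N hN).pow_inj j.2 k.2 h)

lemma re_gam_sub_one (N k : ℕ) :
    (gam N k - 1).re = -2 * Real.sin (Real.pi * k / N) ^ 2 := by
  rw [gam, show 2 * (Real.pi : ℂ) * I * k / N = ((2 * (Real.pi * k / N) : ℝ) : ℂ) * I by
    push_cast; ring, sub_re, Complex.exp_ofReal_mul_I_re, one_re, Real.cos_two_mul, Real.cos_sq']
  ring

lemma Real.sin_le_sin_of_le_of_le_pi_sub {a x : ℝ} (ha : 0 ≤ a) (hax : a ≤ x)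
    (hxa : x ≤ Real.pi - a) : Real.sin a ≤ Real.sin x := by
  rcases le_total x (Real.pi / 2) with hx | hx
  · exact Real.sin_le_sin_of_le_of_le_pi_div_two (by linarith [Real.pi_pos]) hx hax
  · rw [← Real.sin_pi_sub x]
    exact Real.sin_le_sin_of_le_of_le_pi_div_two (by linarith [Real.pi_pos]) (by linarith)
      (by linarith)

lemma sin_sq_pi_div_le {N k : ℕ} (hk : k ≠ 0) (hkN : k < N) :
    Real.sin (Real.pi / N) ^ 2 ≤ Real.sin (Real.pi * k / N) ^ 2 := by
  have hN : (0 : ℝ) < N := by exact_mod_cast (Nat.zero_lt_of_lt hkN)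
  have hk1 : (1 : ℝ) ≤ k := by exact_mod_cast Nat.one_le_iff_ne_zero.mpr hk
  have hkN' : (k : ℝ) + 1 ≤ N := by exact_mod_cast hkN
  have hsin : 0 ≤ Real.sin (Real.pi / N) := Real.sin_nonneg_of_nonneg_of_le_pi (by positivity)
    (div_le_self Real.pi_pos.le (by linarith : (1 : ℝ) ≤ N))
  gcongr
  apply Real.sin_le_sin_of_le_of_le_pi_sub (by positivity : 0 ≤ Real.pi / N)
  · gcongr; exact le_mul_of_one_le_right Real.pi_pos.le hk1
  · rw [div_le_iff₀ hN, sub_mul, div_mul_cancel₀ _ hN.ne']; nlinarith [Real.pi_pos]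

lemma re_mul_gam_sub_one_le {N k : ℕ} {lam : ℝ} (hlam : 0 ≤ lam) (hk : k ≠ 0) (hkN : k < N) :
    ((lam : ℂ) * (gam N k - 1)).re ≤ -(2 * lam * Real.sin (Real.pi / N) ^ 2) := by
  rw [re_ofReal_mul, re_gam_sub_one]
  nlinarith [sin_sq_pi_div_le hk hkN]

def fourierMat (N : ℕ) : Matrix (Fin N) (Fin N) ℂ := vandermonde fun k : Fin N => gam N k

lemma det_fourierMat_ne_zero (N : ℕ) : (fourierMat N).det ≠ 0 :=
  det_vandermonde_ne_zero_iff.mpr (gam_injective N)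

lemma sum_fourierMat_row {N : ℕ} (hN : N ≠ 0) (k : Fin N) :
    ∑ n, fourierMat N k n = if (k : ℕ) = 0 then (N : ℂ) else 0 := by
  simp only [fourierMat, vandermonde_apply]
  rw [Fin.sum_univ_eq_sum_range (fun n => gam N k ^ n)]
  split_ifs with hk
  · simp [gam_eq_pow, hk]
  · have hne : gam N k ≠ 1 := by
      rw [gam_eq_pow]; exact (isPrimitiveRoot_exp N hN).pow_ne_one_of_pos_of_lt hk k.2
    rw [geom_sum_eq hne, gam_pow_self hN, sub_self, zero_div]

lemma ringMat_mulVec_fourierMat_row {N : ℕ} (hN : 2 ≤ N) (k : Fin N) :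
    (ringMat N).map Complex.ofReal *ᵥ fourierMat N k = (gam N k - 1) • fourierMat N k := by
  ext n
  set n' : Fin N := ⟨((n : ℕ) + 1) % N, Nat.mod_lt _ (by omega)⟩
  have hn' : (n' : ℕ) ≠ n := by
    simp only [n']
    rcases Nat.lt_or_ge ((n : ℕ) + 1) N with h | h
    · rw [Nat.mod_eq_of_lt h]; omega
    · rw [show (n : ℕ) + 1 = N by omega, Nat.mod_self]; omega
  have hoff (m : Fin N) (hm : m ≠ n ∧ m ≠ n') :
      (ringMat N).map Complex.ofReal n m * fourierMat N k m = 0 := by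
    simp [ringMat, Fin.val_ne_of_ne hm.1, show (m : ℕ) ≠ ((n : ℕ) + 1) % N from
      fun h => hm.2 (Fin.ext h)]
  rw [mulVec, dotProduct, Fintype.sum_eq_add n n' (Fin.ne_of_val_ne hn'.symm) hoff]
  simp only [map_apply, ringMat, ↓reduceIte, ofReal_neg, ofReal_one, fourierMat,
    vandermonde_apply, neg_mul, one_mul, hn', Pi.smul_apply, smul_eq_mul, n']
  rw [← pow_eq_pow_mod _ (gam_pow_self (by omega) k)]
  ring

def blockCoeff (N : ℕ) (lam beta : ℝ) (k : Fin N) : ℂ :=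
  -(gam N k - 1) / (beta + lam * (gam N k - 1))

def eigenMat (N : ℕ) (lam beta : ℝ) : Matrix (Fin N ⊕ Fin N) (Fin N ⊕ Fin N) ℂ :=
  fromBlocks (fourierMat N) 0 (diagonal (blockCoeff N lam beta) * fourierMat N) (fourierMat N)

def eigenval (N : ℕ) (lam beta : ℝ) : Fin N ⊕ Fin N → ℂ :=
  Sum.elim (fun k => lam * (gam N k - 1)) fun _ => -beta

lemma eigenMat_inl (N : ℕ) (lam beta : ℝ) (k : Fin N) :
    eigenMat N lam beta (.inl k) = Sum.elim (fourierMat N k) 0 := by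
  ext (n | n) <;> simp [eigenMat]

lemma eigenMat_inr (N : ℕ) (lam beta : ℝ) (k : Fin N) :
    eigenMat N lam beta (.inr k) =
      Sum.elim (blockCoeff N lam beta k • fourierMat N k) (fourierMat N k) := by
  ext (n | n) <;> simp [eigenMat]

lemma blockB_mulVec_eigenMat_row {N : ℕ} (hN : 2 ≤ N) {lam beta : ℝ}
    (hinv : ∀ k < N, (beta : ℂ) + lam * (gam N k - 1) ≠ 0) (i : Fin N ⊕ Fin N) :
    blockB N lam beta *ᵥ eigenMat N lam beta i = eigenval N lam beta i • eigenMat N lam beta i := by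
  rcases i with k | k
  · rw [eigenMat_inl, blockB, fromBlocks_mulVec, Sum.elim_comp_inl, Sum.elim_comp_inr,
      smul_mulVec, ringMat_mulVec_fourierMat_row hN]
    ext (n | n) <;> simp [eigenval, mul_assoc]
  · have hc : (lam : ℂ) * (gam N k - 1) * blockCoeff N lam beta k + (gam N k - 1) =
        -beta * blockCoeff N lam beta k := by
      have := hinv k k.2
      rw [blockCoeff]; field_simp; ring
    rw [eigenMat_inr, blockB, fromBlocks_mulVec, Sum.elim_comp_inl, Sum.elim_comp_inr]
    simp only [smul_mulVec, mulVec_smul, neg_smul, neg_mulVec, one_mulVec, zero_mulVec,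
      ringMat_mulVec_fourierMat_row hN]
    ext (n | n)
    · simp only [Sum.elim_inl, Sum.elim_inr, Pi.add_apply, Pi.smul_apply, smul_eq_mul,
        Complex.coe_smul, smul_zero, zero_add, real_smul, eigenval]
      linear_combination fourierMat N k n * hc
    · simp [eigenval]

lemma det_eigenMat_ne_zero (N : ℕ) (lam beta : ℝ) : (eigenMat N lam beta).det ≠ 0 := by
  rw [eigenMat, det_fromBlocks_zero₁₂]
  exact mul_ne_zero (det_fourierMat_ne_zero N) (det_fourierMat_ne_zero N)

def eigenBasis (N : ℕ) (lam beta : ℝ) :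
    Module.Basis (Fin N ⊕ Fin N) ℂ (EuclideanSpace ℂ (Fin N ⊕ Fin N)) :=
  basisOfLinearIndependentOfCardEqFinrank' (fun i => WithLp.toLp 2 (eigenMat N lam beta i))
    ((linearIndependent_rows_of_det_ne_zero (det_eigenMat_ne_zero N lam beta)).map'
      (WithLp.linearEquiv 2 ℂ _).symm.toLinearMap (LinearEquiv.ker _))
    (finrank_euclideanSpace).symm

lemma eigenBasis_apply (N : ℕ) (lam beta : ℝ) (i : Fin N ⊕ Fin N) :
    eigenBasis N lam beta i = WithLp.toLp 2 (eigenMat N lam beta i) := by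
  unfold eigenBasis
  exact congrFun (coe_basisOfLinearIndependentOfCardEqFinrank' _ _ _) i

lemma sum_eigenMat_row_inl {N : ℕ} (hN : N ≠ 0) (lam beta : ℝ) (k : Fin N) (hk : (k : ℕ) = 0)
    (i : Fin N ⊕ Fin N) :
    ∑ n, eigenMat N lam beta i (.inl n) = if i = .inl k then (N : ℂ) else 0 := by
  rcases i with j | j
  · simp [eigenMat_inl, sum_fourierMat_row hN, ← Fin.val_inj, hk]
  · have hc : (j : ℕ) = 0 → blockCoeff N lam beta j = 0 := fun hj => by
      simp [blockCoeff, hj, gam]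
    simp only [eigenMat_inr, Sum.elim_inl, Pi.smul_apply, smul_eq_mul, ← Finset.mul_sum,
      sum_fourierMat_row hN, reduceCtorEq, if_false]
    split_ifs with hj <;> simp [hc, hj]

lemma eigenBasis_repr_inl_eq_zero {N : ℕ} (hN : N ≠ 0) (lam beta : ℝ) {z : Fin N ⊕ Fin N → ℂ}
    (hz : ∑ n, z (.inl n) = 0) (k : Fin N) (hk : (k : ℕ) = 0) :
    (eigenBasis N lam beta).repr (WithLp.toLp 2 z) (.inl k) = 0 := by
  set r := (eigenBasis N lam beta).repr (WithLp.toLp 2 z)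
  have hsum : (N : ℂ) * r (.inl k) = ∑ n, z (.inl n) := calc
    (N : ℂ) * r (.inl k) = ∑ i, r i * ∑ n, eigenMat N lam beta i (.inl n) := by
      simp [sum_eigenMat_row_inl hN lam beta k hk, mul_comm]
    _ = ∑ n, z (.inl n) := by
      conv_rhs => rw [← WithLp.ofLp_toLp 2 z, ← (eigenBasis N lam beta).sum_repr (WithLp.toLp 2 z)]
      simp only [Finset.mul_sum, WithLp.ofLp_sum, Finset.sum_apply, WithLp.ofLp_smul,
        Pi.smul_apply, smul_eq_mul, eigenBasis_apply]
      exact Finset.sum_comm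
  rw [hz] at hsum
  exact (mul_eq_zero.mp hsum).resolve_left (Nat.cast_ne_zero.mpr hN)

lemma eucNorm_eq_norm_toLp {N : ℕ} (v : Fin N ⊕ Fin N → ℂ) : eucNorm v = ‖WithLp.toLp 2 v‖ := by
  rw [EuclideanSpace.norm_eq, eucNorm]

lemma toLpLin_exp_smul_blockB_eigenBasis {N : ℕ} (hN : 2 ≤ N) {lam beta : ℝ}
    (hinv : ∀ k < N, (beta : ℂ) + lam * (gam N k - 1) ≠ 0) (t : ℝ) (i : Fin N ⊕ Fin N) :
    toLpLin 2 2 (NormedSpace.exp ((t : ℂ) • blockB N lam beta)) (eigenBasis N lam beta i) =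
      Complex.exp (t * eigenval N lam beta i) • eigenBasis N lam beta i := by
  rw [eigenBasis_apply, toLpLin_toLp, toLin'_apply, exp_mulVec_of_mulVec_eq_smul (by
    rw [smul_mulVec, blockB_mulVec_eigenMat_row hN hinv, smul_smul]), ← Complex.exp_eq_exp_ℂ,
    WithLp.toLp_smul]

lemma re_eigenval_le_of_repr_ne_zero {N : ℕ} (hN : N ≠ 0) {lam beta : ℝ} (hlam : 0 ≤ lam)
    {z : Fin N ⊕ Fin N → ℂ} (hz : ∑ n, z (.inl n) = 0) {i : Fin N ⊕ Fin N}
    (hi : (eigenBasis N lam beta).repr (WithLp.toLp 2 z) i ≠ 0) :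
    (eigenval N lam beta i).re ≤ -min beta (2 * lam * Real.sin (Real.pi / N) ^ 2) := by
  rcases i with k | k
  · have hk : (k : ℕ) ≠ 0 := fun hk => hi (eigenBasis_repr_inl_eq_zero hN lam beta hz k hk)
    exact (re_mul_gam_sub_one_le hlam hk k.2).trans (neg_le_neg (min_le_right _ _))
  · simp [eigenval]

/-- with δ = min{β, 2λ sin²(π/N)} > 0, there is C > 0 such that for every
z ∈ ℂ^{2N} whose first N coordinates sum to zero and every t ≥ 0,
‖e^{Bt} z‖ ≤ C ‖z‖ e^{−δt}; in particular e^{Bt} z → 0 as t → ∞ for such z. -/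
theorem stmt7 (N : ℕ) (hN : 2 ≤ N) (lam beta : ℝ) (hlam : 0 < lam) (hbeta : 0 < beta)
    (hinv : ∀ k < N, (beta : ℂ) + lam * (gam N k - 1) ≠ 0)
    (δ : ℝ) (hδ : δ = min beta (2 * lam * Real.sin (Real.pi / N) ^ 2)) :
    (0 < δ) ∧
    (∃ C > (0 : ℝ), ∀ z : Fin N ⊕ Fin N → ℂ, (∑ n : Fin N, z (Sum.inl n)) = 0 →
      ∀ t : ℝ, 0 ≤ t →
        eucNorm ((NormedSpace.exp ((t : ℂ) • blockB N lam beta)).mulVec z) ≤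
          C * eucNorm z * Real.exp (-δ * t)) ∧
    (∀ z : Fin N ⊕ Fin N → ℂ, (∑ n : Fin N, z (Sum.inl n)) = 0 →
      Tendsto (fun t : ℝ => (NormedSpace.exp ((t : ℂ) • blockB N lam beta)).mulVec z)
        atTop (nhds 0)) := by
  have hsin : 0 < Real.sin (Real.pi / N) := Real.sin_pos_of_pos_of_lt_pi (by positivity)
    (div_lt_self Real.pi_pos (by exact_mod_cast hN))
  have hδ_pos : 0 < δ := hδ ▸ lt_min hbeta (by positivity)
  obtain ⟨C, hC, hL⟩ := (eigenBasis N lam beta).exists_norm_apply_le_of_apply_eq_smul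
  have decay (z : Fin N ⊕ Fin N → ℂ) (hz : ∑ n, z (.inl n) = 0) (t : ℝ) (ht : 0 ≤ t) :
      eucNorm (NormedSpace.exp ((t : ℂ) • blockB N lam beta) *ᵥ z) ≤
        C * eucNorm z * Real.exp (-δ * t) := by
    rw [eucNorm_eq_norm_toLp, eucNorm_eq_norm_toLp]
    refine hL _ _ (toLpLin_exp_smul_blockB_eigenBasis hN hinv t) _ (Real.exp_pos _).le _
      fun i hi => ?_
    have hre := hδ ▸ re_eigenval_le_of_repr_ne_zero (by omega) hlam.le hz hi
    rw [Complex.norm_exp, Real.exp_le_exp, re_ofReal_mul]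
    linarith [mul_le_mul_of_nonneg_left hre ht]
  refine ⟨hδ_pos, ⟨C, hC, decay⟩, fun z hz => ?_⟩
  have hbound : Tendsto (fun t => C * eucNorm z * Real.exp (-δ * t)) atTop (nhds 0) := by
    simpa using (Real.tendsto_exp_atBot.comp
      (tendsto_id.const_mul_atTop_of_neg (neg_neg_of_pos hδ_pos))).const_mul (C * eucNorm z)
  have hlp : Tendsto
      (fun t : ℝ => WithLp.toLp 2 (NormedSpace.exp ((t : ℂ) • blockB N lam beta) *ᵥ z))
      atTop (nhds 0) :=
    squeeze_zero_norm' (eventually_ge_atTop 0 |>.mono fun t ht => by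
      rw [← eucNorm_eq_norm_toLp]; exact decay z hz t ht) hbound
  exact ((PiLp.continuous_ofLp 2 _).tendsto' 0 0 rfl).comp hlp
end
end

section
/- For every λ > 0, the matrix e^{λAt} A converges to the zero matrix as t → ∞. -/
/-!
Over `ℂ`, `A = P - 1` where `P` is the cyclic shift. For a primitive `N`-th root of unity `ζ` the
Vandermonde matrix `V = (ζ ^ (i * k))` diagonalizes `P`, so `A V = V D` with
`D = diagonal (ζ ^ k - 1)`. Each eigenvalue `ζ ^ k - 1` is either `0` or has negative real part,
because `ζ ^ k` lies on the unit circle. Hence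
`exp (s A) A = V · diagonal (exp (s (ζ ^ k - 1)) (ζ ^ k - 1)) · V⁻¹ → 0` as `s → ∞`.
-/

open Matrix Filter

noncomputable section

open Topology NormedSpace

namespace Complex

theorem sub_one_eq_zero_or_re_neg {z : ℂ} (hz : ‖z‖ = 1) : z - 1 = 0 ∨ (z - 1).re < 0 := by
  rw [sub_eq_zero, sub_re, one_re, sub_neg]
  refine or_iff_not_imp_right.mpr fun hre => ?_
  have hre_one : z.re = 1 := le_antisymm (hz ▸ re_le_norm z) (not_lt.mp hre)
  have him : z.im = 0 := abs_re_eq_norm.mp (by rw [hre_one, hz, abs_one])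
  exact ext (by simpa using hre_one) (by simpa using him)

theorem tendsto_exp_ofReal_mul_mul_atTop {c : ℂ} (hc : c = 0 ∨ c.re < 0) :
    Tendsto (fun s : ℝ => exp (s * c) * c) atTop (𝓝 0) := by
  rcases hc with rfl | hc
  · simp
  · have hlin : Tendsto (fun s : ℝ => (s : ℂ) * c) atTop (comap re atBot) := by
      refine tendsto_comap_iff.mpr ?_
      simpa [Function.comp_def] using tendsto_id.atTop_mul_const_of_neg hc
    simpa using (tendsto_exp_comap_re_atBot.comp hlin).mul_const c

end Complex

namespace Matrix

section Exp

variable {n : Type*} [Fintype n] [DecidableEq n]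

theorem tendsto_exp_smul_mul_atTop_of_mul_eq_mul_diagonal {M U : Matrix n n ℂ} {d : n → ℂ}
    (hU : IsUnit U) (hMU : M * U = U * diagonal d) (hd : ∀ k, d k = 0 ∨ (d k).re < 0) :
    Tendsto (fun s : ℝ => exp (s • M) * M) atTop (𝓝 0) := by
  have hUdet := (isUnit_iff_isUnit_det U).mp hU
  have hM : M = U * diagonal d * U⁻¹ := by rw [← hMU, mul_nonsing_inv_cancel_right _ _ hUdet]
  have hexp_d (s : ℝ) : exp (s • d) = fun k => Complex.exp (s * d k) := by
    funext k
    rw [Pi.coe_exp, ← Complex.exp_eq_exp_ℂ, Pi.smul_apply, Complex.real_smul]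
  have hconj (s : ℝ) :
      exp (s • M) * M = U * diagonal (fun k => Complex.exp (s * d k) * d k) * U⁻¹ := by
    have hsM : s • M = U * diagonal (s • d) * U⁻¹ := by
      rw [hM, diagonal_smul, mul_smul_comm, smul_mul_assoc]
    calc exp (s • M) * M = U * (diagonal (exp (s • d)) * (U⁻¹ * U) * diagonal d) * U⁻¹ := by
          rw [hsM, exp_conj _ _ hU, exp_diagonal, hM]
          simp only [mul_assoc]
      _ = U * diagonal (fun k => Complex.exp (s * d k) * d k) * U⁻¹ := by
          rw [nonsing_inv_mul _ hUdet, mul_one, diagonal_mul_diagonal, hexp_d]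
  have hdiag : Tendsto (fun s : ℝ => diagonal (fun k => Complex.exp (s * d k) * d k))
      atTop (𝓝 (diagonal 0)) :=
    (continuous_id.matrix_diagonal.tendsto _).comp
      (tendsto_pi_nhds.mpr fun k => Complex.tendsto_exp_ofReal_mul_mul_atTop (hd k))
  simpa [hconj] using (hdiag.const_mul U).mul_const U⁻¹

-- Any normed-ring structure on matrices makes `map_exp` applicable; `exp` does not depend on it.
theorem map_exp_ofReal (A : Matrix n n ℝ) :
    (exp A).map Complex.ofReal = exp (A.map Complex.ofReal) :=
  open scoped Norms.Operator in
  NormedSpace.map_exp Complex.ofRealHom.mapMatrix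
    (continuous_id.matrix_map Complex.continuous_ofReal) A

end Exp

theorem tendsto_zero_of_tendsto_map_ofReal {α m n : Type*} {l : Filter α}
    {f : α → Matrix m n ℝ} (h : Tendsto (fun x => (f x).map Complex.ofReal) l (𝓝 0)) :
    Tendsto f l (𝓝 0) := by
  simpa [Function.comp_def] using
    ((continuous_id.matrix_map Complex.continuous_re).tendsto 0).comp h

end Matrix

theorem val_finRotate {N : ℕ} (i : Fin N) : (finRotate N i : ℕ) = (i + 1) % N := by
  have := i.neZero
  rw [finRotate_apply, Fin.val_add, Fin.val_one', Nat.add_mod_mod]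

theorem permMatrix_finRotate_mul_vandermonde {R : Type*} [CommRing R] {N : ℕ} {ζ : R}
    (hζ : ζ ^ N = 1) :
    (finRotate N).permMatrix R * vandermonde (fun i : Fin N => ζ ^ (i : ℕ))
      = vandermonde (fun i : Fin N => ζ ^ (i : ℕ)) * diagonal (fun k : Fin N => ζ ^ (k : ℕ)) := by
  ext i k
  rw [PEquiv.toMatrix_toPEquiv_mul, submatrix_apply, mul_diagonal, vandermonde_apply,
    vandermonde_apply, id, val_finRotate, ← pow_mul, ← pow_mul, ← pow_add, ← Nat.succ_mul,
    pow_eq_pow_mod _ hζ, Nat.mod_mul_mod, ← pow_eq_pow_mod _ hζ]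

theorem isUnit_vandermonde_pow {K : Type*} [Field K] {N : ℕ} {ζ : K}
    (hζ : IsPrimitiveRoot ζ N) : IsUnit (vandermonde (fun i : Fin N => ζ ^ (i : ℕ))) := by
  rw [isUnit_iff_isUnit_det, isUnit_iff_ne_zero, det_vandermonde_ne_zero_iff]
  exact fun i j h => Fin.ext (hζ.pow_inj i.isLt j.isLt h)

theorem ringMat_map_ofReal {N : ℕ} (hN : 2 ≤ N) :
    (ringMat N).map Complex.ofReal = (finRotate N).permMatrix ℂ - 1 := by
  ext i j
  have hne : finRotate N i ≠ i :=
    Equiv.Perm.mem_support.mp (by simp [support_finRotate_of_le hN])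
  simp only [map_apply, ringMat, Matrix.sub_apply, one_apply, PEquiv.toMatrix_apply,
    Equiv.toPEquiv_apply, Option.mem_def, Option.some.injEq, ← val_finRotate, Fin.val_inj]
  by_cases hji : j = i
  · subst hji
    simp only [if_true, if_neg hne, Complex.ofReal_neg, Complex.ofReal_one, zero_sub]
  · simp only [if_neg (Ne.symm hji), sub_zero, eq_comm (a := j)]
    split_ifs <;> simp

theorem ringMat_map_ofReal_mul_vandermonde {N : ℕ} (hN : 2 ≤ N) {ζ : ℂ} (hζ : ζ ^ N = 1) :
    (ringMat N).map Complex.ofReal * vandermonde (fun i : Fin N => ζ ^ (i : ℕ))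
      = vandermonde (fun i : Fin N => ζ ^ (i : ℕ))
        * diagonal (fun k : Fin N => ζ ^ (k : ℕ) - 1) := by
  rw [ringMat_map_ofReal hN, sub_mul, permMatrix_finRotate_mul_vandermonde hζ, one_mul]
  simp [← diagonal_sub, mul_sub]

/-- for every λ > 0, e^{λAt} A → 0 as t → ∞. -/
theorem stmt9 (N : ℕ) (hN : 2 ≤ N) (lam : ℝ) (hlam : 0 < lam) :
    Tendsto (fun t : ℝ => NormedSpace.exp (t • (lam • ringMat N)) * ringMat N)
      atTop (nhds 0) := by
  obtain ⟨ζ, hζ⟩ : ∃ ζ : ℂ, IsPrimitiveRoot ζ N :=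
    ⟨_, Complex.isPrimitiveRoot_exp N (by omega)⟩
  have hd (k : Fin N) : ζ ^ (k : ℕ) - 1 = 0 ∨ (ζ ^ (k : ℕ) - 1).re < 0 :=
    Complex.sub_one_eq_zero_or_re_neg (by rw [norm_pow, hζ.norm'_eq_one (by omega), one_pow])
  have hlim := (tendsto_exp_smul_mul_atTop_of_mul_eq_mul_diagonal (isUnit_vandermonde_pow hζ)
    (ringMat_map_ofReal_mul_vandermonde hN hζ.pow_eq_one) hd).comp
      (tendsto_id.atTop_mul_const hlam)
  refine tendsto_zero_of_tendsto_map_ofReal (hlim.congr fun t => ?_)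
  have hsmul : ((t * lam) • ringMat N).map Complex.ofReal
      = (t * lam) • (ringMat N).map Complex.ofReal := by
    ext; simp
  simp only [Function.comp_apply, id, smul_smul]
  rw [← hsmul, ← map_exp_ofReal]
  exact (Matrix.map_mul (f := Complex.ofRealHom)).symm
end
end
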